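/- arXiv:2010.02868 — 4 statements merged into one kernel-verified Lean document; each statement's English description precedes it below -/
import Mathlib

section
/- (Deep Chapman–Kolmogorov equation.) Let X be a finite nonempty set, let n ≥ 1, fix current states x^1,…,x^n ∈ X, and let T : X → PMF(X) assign to each state a transition distribution over next states. Let ξ^1,…,ξ^n be independent random variables with ξ^i distributed according to T(x^i) (joint distribution the product PMF ∏_{i=1}^n T(x^i)). Fix x' ∈ X and for each x ∈ X let m_x = |{i : x^i = x}|. Then the random count N(x') = Σ_{i=1}^n 1{ξ^i = x'} of agents whose next state is x' is distributed as the sum of |X| independent binomial random variables N_x ~ Binomial(m_x, T(x)(x')), x ∈ X. Formally, the pushforward of ∏_{i=1}^n T(x^i) under the map (ξ^1,…,ξ^n) ↦ N(x') equals the pushforward, under the map (k_x)_{x∈X} ↦ Σ_{x∈X} k_x, of the product over x ∈ X of the binomial PMFs Binomial(m_x, T(x)(x')); that is, it equals the convolution of these binomial PMFs. -/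
/-!
Encode the number of agents landing in `x'` as the exponent of a formal variable: the law of the
count is read off the coefficients of `∏ i, Σ_b T (x i) b · X ^ [b = x']`. Each factor is the
Bernoulli generating polynomial `(1 - p) + p X` with `p = T (x i) x'`; grouping the agents by
their current state turns the product into `∏ a, ((1 - p_a) + p_a X) ^ m_a`, a product of binomial
generating polynomials, whose `k`-th coefficient is the convolution of the binomial masses.
-/

open Finset Polynomial

namespace Polynomial

variable {R : Type*} [CommSemiring R]

theorem coeff_prod_sum_C_mul_X_pow {ι α : Type*} [Fintype ι] [DecidableEq ι]
    (t : ι → Finset α) (w : ι → α → R) (e : ι → α → ℕ) (k : ℕ) :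
    (∏ i, ∑ b ∈ t i, C (w i b) * X ^ e i b).coeff k
      = ∑ ξ ∈ Fintype.piFinset t with ∑ i, e i (ξ i) = k, ∏ i, w i (ξ i) := by
  simp_rw [prod_univ_sum, prod_mul_distrib, ← map_prod, prod_pow_eq_pow_sum, finsetSum_coeff,
    coeff_C_mul_X_pow, sum_filter, eq_comm]

theorem coeff_prod_eq_sum_piFinset {ι : Type*} [Fintype ι] [DecidableEq ι] (f : ι → R[X]) (k : ℕ) :
    (∏ a, f a).coeff k
      = ∑ κ ∈ Fintype.piFinset (fun _ : ι => range (k + 1)) with ∑ a, κ a = k,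
          ∏ a, (f a).coeff (κ a) := by
  set N := k + 1 + ∑ a, (f a).natDegree
  have hf : ∀ a, f a = ∑ j ∈ range N, C ((f a).coeff j) * X ^ j := fun a => by
    simp_rw [C_mul_X_pow_eq_monomial]
    refine as_sum_range' _ _ ?_
    have := single_le_sum (fun b _ => Nat.zero_le (f b).natDegree) (mem_univ a)
    omega
  rw [prod_congr rfl fun a _ => hf a, coeff_prod_sum_C_mul_X_pow]
  refine sum_congr (Finset.ext fun κ => ?_) fun _ _ => rfl
  simp only [mem_filter, Fintype.mem_piFinset, mem_range, and_congr_left_iff]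
  rintro rfl
  have hle : ∀ a, κ a ≤ ∑ b, κ b := fun a => single_le_sum (fun _ _ => Nat.zero_le _) (mem_univ a)
  exact ⟨fun _ a => Nat.lt_succ_of_le (hle a), fun _ a => by have := hle a; omega⟩

end Polynomial

section Bernoulli

variable {R : Type*} [CommRing R]

noncomputable def bernoulliPGF (p : R) : R[X] := C (1 - p) + C p * X

theorem sum_C_mul_X_pow_ite_eq_bernoulliPGF {α : Type*} [Fintype α] [DecidableEq α]
    {q : α → R} (hq : ∑ b, q b = 1) (y : α) :
    ∑ b, C (q b) * X ^ (if b = y then 1 else 0) = bernoulliPGF (q y) := by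
  have hrest : ∑ b ∈ univ.erase y, q b = 1 - q y := by
    rw [← hq, ← add_sum_erase _ _ (mem_univ y), add_sub_cancel_left]
  rw [← add_sum_erase _ _ (mem_univ y), if_pos rfl, pow_one, add_comm, bernoulliPGF, ← hrest,
    map_sum]
  congr 1
  exact sum_congr rfl fun b hb => by rw [if_neg (ne_of_mem_erase hb), pow_zero, mul_one]

theorem coeff_bernoulliPGF_pow (p : R) (m j : ℕ) :
    ((bernoulliPGF p) ^ m).coeff j = m.choose j * p ^ j * (1 - p) ^ (m - j) := by
  have hexpand : bernoulliPGF p ^ m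
      = ∑ i ∈ range (m + 1), C (m.choose i * p ^ i * (1 - p) ^ (m - i)) * X ^ i := by
    rw [bernoulliPGF, add_comm, add_pow]
    refine sum_congr rfl fun i _ => ?_
    simp only [map_mul, map_pow, map_natCast]
    ring
  rw [hexpand, finsetSum_coeff]
  simp_rw [coeff_C_mul_X_pow]
  rw [sum_ite_eq]
  split_ifs with hj
  · rfl
  · rw [Nat.choose_eq_zero_of_lt (by simpa using hj), Nat.cast_zero, zero_mul, zero_mul]

end Bernoulli

theorem prod_comp_eq_prod_pow_card_fiber {ι κ M : Type*} [Fintype ι] [Fintype κ] [DecidableEq κ]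
    [CommMonoid M] (f : κ → M) (g : ι → κ) :
    ∏ i, f (g i) = ∏ a, f a ^ #{i | g i = a} := by
  simp_rw [← prod_const, prod_fiberwise']

theorem deep_chapman_kolmogorov_general
    {X : Type*} [Fintype X] [DecidableEq X]
    (n : ℕ) (x : Fin n → X) (T : X → X → ℝ)
    (hT1 : ∀ a, ∑ b, T a b = 1)
    (x' : X) (k : ℕ) :
    ∑ ξ ∈ Finset.univ.filter
        (fun ξ : Fin n → X => (Finset.univ.filter (fun i => ξ i = x')).card = k),
      ∏ i, T (x i) (ξ i)
    = ∑ κ ∈ (Fintype.piFinset (fun _ : X => Finset.range (k + 1))).filter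
          (fun κ : X → ℕ => ∑ a, κ a = k),
        ∏ a : X,
          (((Finset.univ.filter (fun i => x i = a)).card.choose (κ a) : ℝ)
            * (T a x') ^ (κ a)
            * (1 - T a x') ^ ((Finset.univ.filter (fun i => x i = a)).card - κ a)) := by
  calc _ = (∏ i, ∑ b, C (T (x i) b) * Polynomial.X ^ (if b = x' then 1 else 0)).coeff k := by
          simp_rw [coeff_prod_sum_C_mul_X_pow, Fintype.piFinset_univ, card_filter]
    _ = (∏ i, bernoulliPGF (T (x i) x')).coeff k := by
          simp_rw [sum_C_mul_X_pow_ite_eq_bernoulliPGF (hT1 _)]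
    _ = (∏ a, bernoulliPGF (T a x') ^ #{i | x i = a}).coeff k := by
          rw [prod_comp_eq_prod_pow_card_fiber (fun a => bernoulliPGF (T a x'))]
    _ = _ := by
          simp_rw [coeff_prod_eq_sum_piFinset, coeff_bernoulliPGF_pow]

theorem deep_chapman_kolmogorov
    {X : Type*} [Fintype X] [Nonempty X] [DecidableEq X]
    (n : ℕ) (hn : 1 ≤ n) (x : Fin n → X) (T : X → X → ℝ)
    (hT0 : ∀ a b, 0 ≤ T a b) (hT1 : ∀ a, ∑ b, T a b = 1)
    (x' : X) (k : ℕ) :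
    ∑ ξ ∈ Finset.univ.filter
        (fun ξ : Fin n → X => (Finset.univ.filter (fun i => ξ i = x')).card = k),
      ∏ i, T (x i) (ξ i)
    = ∑ κ ∈ (Fintype.piFinset (fun _ : X => Finset.range (k + 1))).filter
          (fun κ : X → ℕ => ∑ a, κ a = k),
        ∏ a : X,
          (((Finset.univ.filter (fun i => x i = a)).card.choose (κ a) : ℝ)
            * (T a x') ^ (κ a)
            * (1 - T a x') ^ ((Finset.univ.filter (fun i => x i = a)).card - κ a)) :=
  deep_chapman_kolmogorov_general n x T hT1 x' k
end

section
/- (Orthonormal-feature Pythagorean decomposition of quadratic costs.) Let n, z, h ∈ ℕ with n ≥ 1, and let α : {1,…,n} → {1,…,z} → ℝ satisfy the orthonormality condition (1/n)·Σ_{i=1}^n α^{i,j}·α^{i,k} = 1 if j = k and 0 if j ≠ k, for all j,k ∈ {1,…,z}. Given vectors x^1,…,x^n ∈ ℝ^h, define x̄^j = (1/n)·Σ_{i=1}^n α^{i,j}·x^i for j ∈ {1,…,z} and Δx^i = x^i − Σ_{j=1}^z α^{i,j}·x̄^j for i ∈ {1,…,n}. Then for every h × h real matrix Q: (1/n)·Σ_{i=1}^n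 (x^i)ᵀ Q x^i = (1/n)·Σ_{i=1}^n (Δx^i)ᵀ Q Δx^i + Σ_{j=1}^z (x̄^j)ᵀ Q x̄^j. -/
/-!
Write `pⁱ = Σ_j αⁱʲ x̄ʲ`, so that `Δxⁱ = xⁱ - pⁱ`, and let `B` be any bilinear form. Orthonormality
of `α` says that `a ↦ (Σ_j αⁱʲ aʲ)_i` turns `Σ_j B(aʲ, bʲ)` into the empirical mean `(1/n) Σ_i` of `B`,
so the mean of `B(pⁱ, pⁱ)` is `Σ_j B(x̄ʲ, x̄ʲ)`. By the definition of `x̄` alone, the cross terms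
`B(xⁱ, pⁱ)` and `B(pⁱ, xⁱ)` have that same mean, and expanding `B(xⁱ - pⁱ, xⁱ - pⁱ)` gives the identity.
-/

open Matrix Finset

/-- The `j`-th weighted average `v̄ʲ = (1/n) Σ_i αⁱʲ vⁱ`. -/
noncomputable def wavg {n z h : ℕ} (α : Fin n → Fin z → ℝ)
    (v : Fin n → Fin h → ℝ) (j : Fin z) : Fin h → ℝ :=
  (1 / n : ℝ) • ∑ i, α i j • v i

/-- The gauge-transformed deviation `Δvⁱ = vⁱ − Σ_j αⁱʲ v̄ʲ`. -/
noncomputable def dev {n z h : ℕ} (α : Fin n → Fin z → ℝ)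
    (v : Fin n → Fin h → ℝ) (i : Fin n) : Fin h → ℝ :=
  v i - ∑ j, α i j • wavg α v j

theorem mean_bilin_sum_smul_of_orthonormal {𝕜 M : Type*} [Field 𝕜] [AddCommGroup M]
    [Module 𝕜 M] {n z : ℕ} {α : Fin n → Fin z → 𝕜}
    (horth : ∀ j k : Fin z, (1 / n : 𝕜) * ∑ i, α i j * α i k = if j = k then 1 else 0)
    (B : M →ₗ[𝕜] M →ₗ[𝕜] 𝕜) (a b : Fin z → M) :
    (1 / n : 𝕜) * ∑ i, B (∑ j, α i j • a j) (∑ k, α i k • b k) = ∑ j, B (a j) (b j) := by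
  calc (1 / n : 𝕜) * ∑ i, B (∑ j, α i j • a j) (∑ k, α i k • b k)
      = ∑ j, ∑ k, ((1 / n : 𝕜) * ∑ i, α i j * α i k) * B (a j) (b k) := by
        simp only [map_sum, map_smul, LinearMap.sum_apply,
          LinearMap.smul_apply, smul_eq_mul, mul_sum, sum_mul]
        rw [sum_comm_cycle]
        refine sum_congr rfl fun j _ => ?_
        rw [sum_comm]
        exact sum_congr rfl fun k _ => sum_congr rfl fun i _ => by ring
    _ = ∑ j, B (a j) (b j) := by
        simp only [horth, ite_mul, one_mul, zero_mul, sum_ite_eq, mem_univ, if_true]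

section WeightedAverage

variable {n z h : ℕ} (α : Fin n → Fin z → ℝ) (B : LinearMap.BilinForm ℝ (Fin h → ℝ))

theorem mean_bilin_sum_smul_wavg (u v : Fin n → Fin h → ℝ) :
    (1 / n : ℝ) * ∑ i, B (u i) (∑ j, α i j • wavg α v j) = ∑ j, B (wavg α u j) (wavg α v j) := by
  have hwavg : ∀ j w, B (wavg α u j) w = (1 / n : ℝ) * ∑ i, α i j * B (u i) w := by
    simp [wavg]
  simp only [hwavg, map_sum, map_smul, smul_eq_mul, mul_sum]
  exact sum_comm

theorem mean_bilin_eq_mean_bilin_dev_add_sum_bilin_wavg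
    (horth : ∀ j k : Fin z, (1 / n : ℝ) * ∑ i, α i j * α i k = if j = k then 1 else 0)
    (v : Fin n → Fin h → ℝ) :
    (1 / n : ℝ) * ∑ i, B (v i) (v i)
      = (1 / n : ℝ) * ∑ i, B (dev α v i) (dev α v i) + ∑ j, B (wavg α v j) (wavg α v j) := by
  have hcross := mean_bilin_sum_smul_wavg α B v v
  have hcross_flip : (1 / n : ℝ) * ∑ i, B (∑ j, α i j • wavg α v j) (v i)
      = ∑ j, B (wavg α v j) (wavg α v j) :=
    mean_bilin_sum_smul_wavg α (LinearMap.flip B) v v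
  have hproj := mean_bilin_sum_smul_of_orthonormal horth B (wavg α v) (wavg α v)
  simp only [dev, map_sub, LinearMap.sub_apply, sum_sub_distrib, mul_sub]
  linarith

end WeightedAverage

theorem quadratic_cost_pythagorean_decomposition_general
    {n z h : ℕ} (α : Fin n → Fin z → ℝ)
    (horth : ∀ j k : Fin z,
      (1 / n : ℝ) * ∑ i, α i j * α i k = if j = k then 1 else 0)
    (x : Fin n → Fin h → ℝ) (Q : Matrix (Fin h) (Fin h) ℝ) :
    (1 / n : ℝ) * ∑ i, (x i) ⬝ᵥ Q.mulVec (x i)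
      = (1 / n : ℝ) * ∑ i, (dev α x i) ⬝ᵥ Q.mulVec (dev α x i)
        + ∑ j, (wavg α x j) ⬝ᵥ Q.mulVec (wavg α x j) := by
  simpa only [toLinearMap₂'_apply'] using
    mean_bilin_eq_mean_bilin_dev_add_sum_bilin_wavg α (toLinearMap₂' ℝ Q) horth x

theorem quadratic_cost_pythagorean_decomposition
    {n z h : ℕ} (hn : 1 ≤ n) (α : Fin n → Fin z → ℝ)
    (horth : ∀ j k : Fin z,
      (1 / n : ℝ) * ∑ i, α i j * α i k = if j = k then 1 else 0)
    (x : Fin n → Fin h → ℝ) (Q : Matrix (Fin h) (Fin h) ℝ) :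
    (1 / n : ℝ) * ∑ i, (x i) ⬝ᵥ Q.mulVec (x i)
      = (1 / n : ℝ) * ∑ i, (dev α x i) ⬝ᵥ Q.mulVec (dev α x i)
        + ∑ j, (wavg α x j) ⬝ᵥ Q.mulVec (wavg α x j) :=
  quadratic_cost_pythagorean_decomposition_general α horth x Q
end

section
/- (Decoupling of the deviation dynamics under the gauge transformation.) Let n, z, h_x, h_u ∈ ℕ with n ≥ 1, and let α : {1,…,n} → {1,…,z} → ℝ satisfy the orthonormality condition (1/n)·Σ_{i=1}^n α^{i,j}·α^{i,k} = 1 if j = k and 0 if j ≠ k. Let A be an h_x × h_x real matrix, B an h_x × h_u real matrix, and for each j ∈ {1,…,z} let Ā^j be an h_x × (z·h_x) real matrix and B̄^j an h_x × (z·h_u) real matrix. Given vectors x^i, w^i ∈ ℝ^{h_x} and u^i ∈ ℝ^{h_u} for i ∈ {1,…,n}, define the weighted averages x̄^j, ū^j, w̄^j, the stacked vectors 𝐱̄ = (x̄^1;…;x̄^z) ∈ ℝ^{z·h_x} and 𝐮̄ = (ū^1;…;ū^z) ∈ ℝ^{z·h_u}, and the deviations Δx^i, Δu^i, Δw^i.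 Suppose the next states are given by x'^i = A x^i + B u^i + Σ_{j=1}^z α^{i,j}·(Ā^j 𝐱̄ + B̄^j 𝐮̄) + w^i for each i. Then the deviations of the next states satisfy the decoupled linear dynamics Δx'^i = A Δx^i + B Δu^i + Δw^i for every i ∈ {1,…,n}. -/
/-!
STATEMENT 7 (Decoupling of the deviation dynamics under the gauge transformation):
if `x'ⁱ = A xⁱ + B uⁱ + Σ_j αⁱʲ (Āʲ 𝐱̄ + B̄ʲ 𝐮̄) + wⁱ` with orthonormal impact
factors α, then `Δx'ⁱ = A Δxⁱ + B Δuⁱ + Δwⁱ` for every agent `i`.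
-/

open Matrix Finset

/-- The stacked vector (deep state) `𝐯̄ = (v̄¹;…;v̄ᶻ) ∈ ℝ^{z·h}`. -/
noncomputable def stacked {n z h : ℕ} (α : Fin n → Fin z → ℝ)
    (v : Fin n → Fin h → ℝ) : Fin z × Fin h → ℝ :=
  fun p => wavg α v p.1 p.2

/-!
Averaging and taking deviations are linear and commute with the matrices `A`, `B`. The coupling
term is `Σ_j αⁱʲ Cʲ` with `Cʲ` independent of `i`, so by orthonormality its `k`-th average is
`Cᵏ` and its deviation vanishes.
-/

def ImpactOrthonormal {n z : ℕ} (α : Fin n → Fin z → ℝ) : Prop :=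
  ∀ j k : Fin z, (1 / n : ℝ) * ∑ i, α i j * α i k = if j = k then 1 else 0

section Linearity

variable {n z h : ℕ} (α : Fin n → Fin z → ℝ)

lemma wavg_add (v w : Fin n → Fin h → ℝ) (j : Fin z) :
    wavg α (v + w) j = wavg α v j + wavg α w j := by
  simp only [wavg, Pi.add_apply, smul_add, sum_add_distrib]

lemma wavg_mulVec {m : ℕ} (M : Matrix (Fin m) (Fin h) ℝ) (v : Fin n → Fin h → ℝ) (j : Fin z) :
    wavg α (fun i => M *ᵥ v i) j = M *ᵥ wavg α v j := by
  simp only [wavg, mulVec_smul, mulVec_sum]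

lemma dev_add (v w : Fin n → Fin h → ℝ) (i : Fin n) :
    dev α (v + w) i = dev α v i + dev α w i := by
  simp only [dev, wavg_add, smul_add, sum_add_distrib, Pi.add_apply]
  abel

lemma dev_mulVec {m : ℕ} (M : Matrix (Fin m) (Fin h) ℝ) (v : Fin n → Fin h → ℝ) (i : Fin n) :
    dev α (fun i => M *ᵥ v i) i = M *ᵥ dev α v i := by
  simp only [dev, wavg_mulVec, mulVec_sub, mulVec_sum, mulVec_smul]

end Linearity

section Orthonormal

variable {n z h : ℕ} {α : Fin n → Fin z → ℝ}

lemma ImpactOrthonormal.wavg_sum_smul (horth : ImpactOrthonormal α) (C : Fin z → Fin h → ℝ)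
    (k : Fin z) : wavg α (fun i => ∑ j, α i j • C j) k = C k := by
  calc wavg α (fun i => ∑ j, α i j • C j) k
      = ∑ j, ((1 / n : ℝ) * ∑ i, α i k * α i j) • C j := by
        simp only [wavg, smul_sum, smul_smul, sum_smul, mul_sum]
        rw [sum_comm]
    _ = C k := by simp only [horth k, ite_smul, one_smul, zero_smul, sum_ite_eq, mem_univ, if_true]

lemma ImpactOrthonormal.dev_sum_smul (horth : ImpactOrthonormal α) (C : Fin z → Fin h → ℝ)
    (i : Fin n) : dev α (fun i => ∑ j, α i j • C j) i = 0 := by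
  simp only [dev, horth.wavg_sum_smul, sub_self]

end Orthonormal

theorem deviation_dynamics_decoupling_general
    {n z hx hu : ℕ} (α : Fin n → Fin z → ℝ)
    (horth : ∀ j k : Fin z,
      (1 / n : ℝ) * ∑ i, α i j * α i k = if j = k then 1 else 0)
    (A : Matrix (Fin hx) (Fin hx) ℝ) (B : Matrix (Fin hx) (Fin hu) ℝ)
    (Abar : Fin z → Matrix (Fin hx) (Fin z × Fin hx) ℝ)
    (Bbar : Fin z → Matrix (Fin hx) (Fin z × Fin hu) ℝ)
    (x w x' : Fin n → Fin hx → ℝ) (u : Fin n → Fin hu → ℝ)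
    (hdyn : ∀ i, x' i
      = A.mulVec (x i) + B.mulVec (u i)
        + ∑ j, α i j • ((Abar j).mulVec (stacked α x) + (Bbar j).mulVec (stacked α u))
        + w i) :
    ∀ i, dev α x' i = A.mulVec (dev α x i) + B.mulVec (dev α u i) + dev α w i := by
  intro i
  set C : Fin z → Fin hx → ℝ := fun j => Abar j *ᵥ stacked α x + Bbar j *ᵥ stacked α u
  have hx' : x' = (fun i => A *ᵥ x i) + (fun i => B *ᵥ u i) + (fun i => ∑ j, α i j • C j) + w :=
    funext hdyn
  rw [hx', dev_add, dev_add, dev_add, dev_mulVec, dev_mulVec,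
    ImpactOrthonormal.dev_sum_smul horth, add_zero]

theorem deviation_dynamics_decoupling
    {n z hx hu : ℕ} (hn : 1 ≤ n) (α : Fin n → Fin z → ℝ)
    (horth : ∀ j k : Fin z,
      (1 / n : ℝ) * ∑ i, α i j * α i k = if j = k then 1 else 0)
    (A : Matrix (Fin hx) (Fin hx) ℝ) (B : Matrix (Fin hx) (Fin hu) ℝ)
    (Abar : Fin z → Matrix (Fin hx) (Fin z × Fin hx) ℝ)
    (Bbar : Fin z → Matrix (Fin hx) (Fin z × Fin hu) ℝ)
    (x w x' : Fin n → Fin hx → ℝ) (u : Fin n → Fin hu → ℝ)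
    (hdyn : ∀ i, x' i
      = A.mulVec (x i) + B.mulVec (u i)
        + ∑ j, α i j • ((Abar j).mulVec (stacked α x) + (Bbar j).mulVec (stacked α u))
        + w i) :
    ∀ i, dev α x' i = A.mulVec (dev α x i) + B.mulVec (dev α u i) + dev α w i :=
  deviation_dynamics_decoupling_general α horth A B Abar Bbar x w x' u hdyn
end

section
/- (Decomposition of the per-step quadratic cost.) Let n, z, h_x, h_u ∈ ℕ with n ≥ 1, and let α : {1,…,n} → {1,…,z} → ℝ satisfy the orthonormality condition (1/n)·Σ_{i=1}^n α^{i,j}·α^{i,k} = 1 if j = k and 0 if j ≠ k. Let Q be an h_x × h_x real matrix, R an h_u × h_u real matrix, Q̄ a (z·h_x) × (z·h_x) real matrix, and R̄ a (z·h_u) × (z·h_u) real matrix. Define 𝐐̄ = diag(Q,…,Q) + Q̄ and 𝐑̄ = diag(R,…,R) + R̄. Given vectors x^i ∈ ℝ^{h_x} and u^i ∈ ℝ^{h_u} for i ∈ {1,…,n}, with weighted averages x̄^j, ū^j, stacked deep states 𝐱̄, 𝐮̄, and deviations Δx^i, Δu^i, the average per-step cost decomposes as: (1/n)·Σ_{i=1}^n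 [(x^i)ᵀQx^i + (u^i)ᵀRu^i] + 𝐱̄ᵀQ̄𝐱̄ + 𝐮̄ᵀR̄𝐮̄ = (1/n)·Σ_{i=1}^n [(Δx^i)ᵀQΔx^i + (Δu^i)ᵀRΔu^i] + 𝐱̄ᵀ𝐐̄𝐱̄ + 𝐮̄ᵀ𝐑̄𝐮̄. -/
/-!
Write `vⁱ = Δvⁱ + Σⱼ αⁱʲ v̄ʲ`. Orthonormality of the impact factors gives `Σᵢ αⁱʲ Δvⁱ = 0` for
every `j`, so when the quadratic form `vᵀ M v` is expanded and summed over `i`, the cross terms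
vanish. The remaining term `Σᵢ (Σⱼ αⁱʲ v̄ʲ)ᵀ M (Σₖ αⁱᵏ v̄ᵏ)` involves the Gram coefficients
`Σᵢ αⁱʲ αⁱᵏ = n δⱼₖ`, so after dividing by `n` it equals `Σⱼ (v̄ʲ)ᵀ M v̄ʲ = 𝐯̄ᵀ diag(M,…,M) 𝐯̄`.
Applying this to `(x, Q)` and `(u, R)` gives the theorem.
-/

open Matrix Finset

/-- The z-fold block-diagonal matrix `diag(M,…,M)`. -/
def zBlockDiag {z h : ℕ} (M : Matrix (Fin h) (Fin h) ℝ) :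
    Matrix (Fin z × Fin h) (Fin z × Fin h) ℝ :=
  Matrix.of fun p q => if p.1 = q.1 then M p.2 q.2 else 0

namespace LinearMap.BilinForm

variable {R E ι κ : Type*} [CommRing R] [AddCommGroup E] [Module R E] [Fintype ι] [Fintype κ]
  (B : LinearMap.BilinForm R E)

theorem sum_apply_sum_smul_right (a : ι → κ → R) (d : ι → E) (w : κ → E) :
    ∑ i, B (d i) (∑ j, a i j • w j) = ∑ j, B (∑ i, a i j • d i) (w j) := by
  simp only [sum_left, sum_right, smul_left, smul_right]
  exact Finset.sum_comm

theorem sum_apply_add_sum_smul_of_sum_smul_eq_zero (a : ι → κ → R) (d : ι → E) (w : κ → E)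
    (hd : ∀ j, ∑ i, a i j • d i = 0) :
    ∑ i, B (d i + ∑ j, a i j • w j) (d i + ∑ j, a i j • w j)
      = ∑ i, B (d i) (d i) + ∑ j, ∑ k, (∑ i, a i j * a i k) * B (w j) (w k) := by
  have cross₁ : ∑ i, B (d i) (∑ j, a i j • w j) = 0 := by
    rw [sum_apply_sum_smul_right]; simp [hd]
  have cross₂ : ∑ i, B (∑ j, a i j • w j) (d i) = 0 := by
    simpa [hd] using B.flip.sum_apply_sum_smul_right a d w
  have gram : ∑ i, B (∑ j, a i j • w j) (∑ j, a i j • w j)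
      = ∑ j, ∑ k, (∑ i, a i j * a i k) * B (w j) (w k) := by
    simp only [sum_left, sum_right, smul_left, smul_right, Finset.sum_mul, Finset.mul_sum]
    rw [Finset.sum_comm_cycle]
    refine Finset.sum_congr rfl fun j _ => ?_
    rw [Finset.sum_comm]
    refine Finset.sum_congr rfl fun k _ => Finset.sum_congr rfl fun i _ => ?_
    ring
  simp only [map_add, LinearMap.add_apply, Finset.sum_add_distrib, cross₁, cross₂, gram]
  ring

end LinearMap.BilinForm

section WeightedAverages

variable {n z h : ℕ} (α : Fin n → Fin z → ℝ)

theorem sum_smul_eq_natCast_smul_wavg (v : Fin n → Fin h → ℝ) (j : Fin z) :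
    ∑ i, α i j • v i = (n : ℝ) • wavg α v j := by
  rcases Nat.eq_zero_or_pos n with rfl | hn
  · simp
  · simp [wavg, smul_smul, hn.ne']

def ImpactFactorsOrthonormal : Prop :=
  ∀ j k : Fin z, (1 / n : ℝ) * ∑ i, α i j * α i k = if j = k then 1 else 0

variable {α}

theorem sum_mul_eq_of_orthonormal (hα : ImpactFactorsOrthonormal α)
    (j k : Fin z) : ∑ i, α i j * α i k = n * if j = k then 1 else 0 := by
  rcases Nat.eq_zero_or_pos n with rfl | hn
  · simp
  · rw [← hα, ← mul_assoc, one_div, mul_inv_cancel₀ (by positivity), one_mul]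

theorem sum_smul_dev_eq_zero (hα : ImpactFactorsOrthonormal α)
    (v : Fin n → Fin h → ℝ) (j : Fin z) : ∑ i, α i j • dev α v i = 0 := by
  simp only [dev, smul_sub, Finset.sum_sub_distrib, Finset.smul_sum, smul_smul]
  rw [Finset.sum_comm]
  simp only [← Finset.sum_smul, sum_mul_eq_of_orthonormal hα, sum_smul_eq_natCast_smul_wavg]
  simp

theorem sum_sum_gram_mul_eq_of_orthonormal {E : Type*} [AddCommGroup E] [Module ℝ E]
    (hα : ImpactFactorsOrthonormal α)
    (B : LinearMap.BilinForm ℝ E) (w : Fin z → E) :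
    ∑ j, ∑ k, (∑ i, α i j * α i k) * B (w j) (w k) = n * ∑ j, B (w j) (w j) := by
  simp [sum_mul_eq_of_orthonormal hα, Finset.mul_sum]

theorem sum_dotProduct_mulVec_self_eq_sum_dev_add (hα : ImpactFactorsOrthonormal α)
    (M : Matrix (Fin h) (Fin h) ℝ) (v : Fin n → Fin h → ℝ) :
    ∑ i, v i ⬝ᵥ M *ᵥ v i
      = ∑ i, dev α v i ⬝ᵥ M *ᵥ dev α v i + n * ∑ j, wavg α v j ⬝ᵥ M *ᵥ wavg α v j := by
  have hv : ∀ i, v i = dev α v i + ∑ j, α i j • wavg α v j := fun i => by simp [dev]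
  simp only [← Matrix.toBilin'_apply']
  conv_lhs => enter [2, i]; rw [hv i]
  rw [LinearMap.BilinForm.sum_apply_add_sum_smul_of_sum_smul_eq_zero _ _ _ _
      (sum_smul_dev_eq_zero hα v), sum_sum_gram_mul_eq_of_orthonormal hα]

theorem stacked_dotProduct_zBlockDiag_mulVec (M : Matrix (Fin h) (Fin h) ℝ)
    (v : Fin n → Fin h → ℝ) :
    stacked α v ⬝ᵥ zBlockDiag M *ᵥ stacked α v = ∑ j, wavg α v j ⬝ᵥ M *ᵥ wavg α v j := by
  simp only [dotProduct, Matrix.mulVec, zBlockDiag, Fintype.sum_prod_type, stacked,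
    Matrix.of_apply]
  simp [Finset.sum_ite_eq]

theorem mean_dotProduct_mulVec_self_eq_mean_dev_add (hα : ImpactFactorsOrthonormal α)
    (M : Matrix (Fin h) (Fin h) ℝ) (v : Fin n → Fin h → ℝ) :
    (1 / n : ℝ) * ∑ i, v i ⬝ᵥ M *ᵥ v i
      = (1 / n : ℝ) * ∑ i, dev α v i ⬝ᵥ M *ᵥ dev α v i
        + stacked α v ⬝ᵥ zBlockDiag M *ᵥ stacked α v := by
  rw [sum_dotProduct_mulVec_self_eq_sum_dev_add hα, stacked_dotProduct_zBlockDiag_mulVec,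
    mul_add, ← mul_assoc]
  rcases Nat.eq_zero_or_pos n with rfl | hn
  · -- `1 / 0 = 0` makes every weighted average vanish
    simp [wavg]
  · rw [one_div_mul_cancel (by positivity), one_mul]

end WeightedAverages

theorem per_step_quadratic_cost_decomposition_general
    {n z hx hu : ℕ} (α : Fin n → Fin z → ℝ)
    (horth : ∀ j k : Fin z,
      (1 / n : ℝ) * ∑ i, α i j * α i k = if j = k then 1 else 0)
    (Q : Matrix (Fin hx) (Fin hx) ℝ) (R : Matrix (Fin hu) (Fin hu) ℝ)
    (Qbar : Matrix (Fin z × Fin hx) (Fin z × Fin hx) ℝ)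
    (Rbar : Matrix (Fin z × Fin hu) (Fin z × Fin hu) ℝ)
    (x : Fin n → Fin hx → ℝ) (u : Fin n → Fin hu → ℝ) :
    (1 / n : ℝ) * ∑ i, ((x i) ⬝ᵥ Q.mulVec (x i) + (u i) ⬝ᵥ R.mulVec (u i))
      + (stacked α x) ⬝ᵥ Qbar.mulVec (stacked α x)
      + (stacked α u) ⬝ᵥ Rbar.mulVec (stacked α u)
    = (1 / n : ℝ) * ∑ i,
          ((dev α x i) ⬝ᵥ Q.mulVec (dev α x i) + (dev α u i) ⬝ᵥ R.mulVec (dev α u i))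
      + (stacked α x) ⬝ᵥ (zBlockDiag Q + Qbar).mulVec (stacked α x)
      + (stacked α u) ⬝ᵥ (zBlockDiag R + Rbar).mulVec (stacked α u) := by
  simp only [Finset.sum_add_distrib, mul_add, Matrix.add_mulVec, dotProduct_add]
  rw [mean_dotProduct_mulVec_self_eq_mean_dev_add horth Q x,
    mean_dotProduct_mulVec_self_eq_mean_dev_add horth R u]
  ring

theorem per_step_quadratic_cost_decomposition
    {n z hx hu : ℕ} (hn : 1 ≤ n) (α : Fin n → Fin z → ℝ)
    (horth : ∀ j k : Fin z,
      (1 / n : ℝ) * ∑ i, α i j * α i k = if j = k then 1 else 0)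
    (Q : Matrix (Fin hx) (Fin hx) ℝ) (R : Matrix (Fin hu) (Fin hu) ℝ)
    (Qbar : Matrix (Fin z × Fin hx) (Fin z × Fin hx) ℝ)
    (Rbar : Matrix (Fin z × Fin hu) (Fin z × Fin hu) ℝ)
    (x : Fin n → Fin hx → ℝ) (u : Fin n → Fin hu → ℝ) :
    (1 / n : ℝ) * ∑ i, ((x i) ⬝ᵥ Q.mulVec (x i) + (u i) ⬝ᵥ R.mulVec (u i))
      + (stacked α x) ⬝ᵥ Qbar.mulVec (stacked α x)
      + (stacked α u) ⬝ᵥ Rbar.mulVec (stacked α u)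
    = (1 / n : ℝ) * ∑ i,
          ((dev α x i) ⬝ᵥ Q.mulVec (dev α x i) + (dev α u i) ⬝ᵥ R.mulVec (dev α u i))
      + (stacked α x) ⬝ᵥ (zBlockDiag Q + Qbar).mulVec (stacked α x)
      + (stacked α u) ⬝ᵥ (zBlockDiag R + Rbar).mulVec (stacked α u) :=
  per_step_quadratic_cost_decomposition_general α horth Q R Qbar Rbar x u
end
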